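/- Let T be the ℵ₀-regular tree, t ∈ T, and 1 < p ≤ ∞. Then every linear operator S : ℓ_p(T) → ℂ^T commuting with λ(g) for all g ∈ Aut(T)_t maps ℓ_p(T \ {t}) into ℂ^{T\{t}} (functions vanishing at t). Consequently, ℓ_p(T \ {t}) is the unique λ(Aut(T)_t)-invariant linear complement of ℂ·𝟙_t in ℓ_p(T). -/

import Mathlib

open scoped ENNReal

noncomputable section

/-- The vertex set of the `ℵ₀`-regular tree, realised as the free group `F_∞`. -/
abbrev V : Type := FreeGroup ℕ

/-- The Cayley graph of `F_∞` with respect to its free generating set: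
the `ℵ₀`-regular tree `T`. -/
def treeGraph : SimpleGraph V :=
  SimpleGraph.fromRel (fun s t => ∃ i : ℕ, t = s * FreeGroup.of i)

/-- The automorphism group `Aut(T)` of the `ℵ₀`-regular tree. -/
abbrev TreeAut := treeGraph ≃g treeGraph

/-- `ℓ_p(T)`. -/
abbrev lpT (p : ℝ≥0∞) := lp (fun _ : V => ℂ) p

lemma memℓp_comp {p : ℝ≥0∞} (g : V ≃ V) {x : V → ℂ} (h : Memℓp x p) :
    Memℓp (fun v => x (g v)) p := by
  rcases ENNReal.trichotomy p with rfl | rfl | hp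
  · rw [memℓp_zero_iff] at h ⊢
    exact Set.Finite.preimage g.injective.injOn h
  · rw [memℓp_infty_iff] at h ⊢
    apply h.mono
    rintro r ⟨v, rfl⟩
    exact ⟨g v, rfl⟩
  · apply memℓp_gen
    exact (g.summable_iff (f := fun v => ‖x v‖ ^ p.toReal)).2 ((memℓp_gen_iff hp).1 h)

/-- The shift representation of permutations of `T` on `ℂ^T`: `λ(g)x = x(g⁻¹ ·)`. -/
def lamFull (g : V ≃ V) : (V → ℂ) →ₗ[ℂ] (V → ℂ) where
  toFun x := fun v => x (g.symm v)
  map_add' _ _ := rfl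
  map_smul' _ _ := rfl

/-- The shift representation of permutations of `T` on `ℓ_p(T)`: `λ(g)x = x(g⁻¹ ·)`. -/
def lam (p : ℝ≥0∞) (g : V ≃ V) : lpT p →ₗ[ℂ] lpT p where
  toFun x := ⟨fun v => x (g.symm v), memℓp_comp g.symm (lp.memℓp x)⟩
  map_add' _ _ := rfl
  map_smul' _ _ := rfl

attribute [local instance] Classical.propDecidable

/-!
Any linear map `f` out of `ℓ_p(T)` that is invariant under the stabiliser of `t` kills every
`y - λ(g) y` with `g t = t`; both `x ↦ (S x)(t)` and `x ↦` (the coefficient of the projection onto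
`ℂ·𝟙_t` along an invariant complement) are such maps. So it suffices that every `x` vanishing at
`t` is a finite sum of such differences.

Label the branches of `T` at `t` by the generators `ℕ`. Two relabellings fixing `t` move the even
branches into the branches labelled `0` resp. `2` mod `4`. For `x` supported on the even branches
the two shifts of `x` therefore have disjoint supports, so `M = (λ(g₀) + λ(g₂))/2` has norm at most
`2^{1/p}/2 < 1` there, and `x = y - M y` with `y = ∑ Mⁿ x`, i.e.
`x = ½(y - λ(g₀) y) + ½(y - λ(g₂) y)`. A third relabelling moves the odd branches onto even ones.
-/

namespace FreeGroup

variable {α β : Type*} [DecidableEq α] [DecidableEq β]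

theorem toWord_map_of_injective {f : α → β} (hf : Function.Injective f) (w : FreeGroup α) :
    (map f w).toWord = w.toWord.map fun x => (f x.1, x.2) := by
  have hred : IsReduced (w.toWord.map fun x => (f x.1, x.2)) :=
    List.isChain_map_of_isChain _ (fun _ _ h hab => h (hf hab)) isReduced_toWord
  rw [← hred.reduce_eq, ← toWord_mk, ← map.mk, mk_toWord]

/-- The generator, forgetting its sign, that the reduced word of `w` starts with. -/
def headLetter (w : FreeGroup α) : Option α :=
  w.toWord.head?.map Prod.fst

theorem headLetter_eq_none_iff {w : FreeGroup α} : headLetter w = none ↔ w = 1 := by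
  simp [headLetter, toWord_eq_nil_iff]

theorem headLetter_map {f : α → β} (hf : Function.Injective f) (w : FreeGroup α) :
    headLetter (map f w) = (headLetter w).map f := by
  simp only [headLetter, toWord_map_of_injective hf, List.head?_map, Option.map_map]
  rfl

end FreeGroup

open FreeGroup

def mulLeftAut (t : V) : TreeAut where
  toEquiv := Equiv.mulLeft t
  map_rel_iff' := by simp [treeGraph, mul_assoc]

def relabelAut (e : ℕ ≃ ℕ) : TreeAut where
  toEquiv := (freeGroupCongr e).toEquiv
  map_rel_iff' {u v} := by
    have key : ∀ u v : V, (∃ i, freeGroupCongr e v = freeGroupCongr e u * of i) ↔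
        ∃ i, v = u * of i := fun u v => by
      constructor
      · rintro ⟨i, hi⟩
        exact ⟨e.symm i, (freeGroupCongr e).injective (by simp [hi])⟩
      · rintro ⟨i, rfl⟩
        exact ⟨e i, by simp⟩
    simp only [treeGraph, SimpleGraph.fromRel_adj, MulEquiv.toEquiv_eq_coe,
      EquivLike.coe_coe, key, (freeGroupCongr e).injective.ne_iff]

/-- The automorphism of `T` fixing `t` that relabels the generators by `e`, as seen from `t`. -/
def fixingAut (t : V) (e : ℕ ≃ ℕ) : TreeAut :=
  (mulLeftAut t⁻¹).trans ((relabelAut e).trans (mulLeftAut t))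

theorem fixingAut_apply (t : V) (e : ℕ ≃ ℕ) (v : V) :
    fixingAut t e v = t * freeGroupCongr e (t⁻¹ * v) :=
  rfl

theorem fixingAut_apply_self (t : V) (e : ℕ ≃ ℕ) : fixingAut t e t = t := by
  simp [fixingAut_apply]

/-- The union of the branches of `T` at `t` whose first edge is labelled by a generator in `A`. -/
def branchSet (t : V) (A : Set ℕ) : Set V :=
  {v | ∃ k ∈ A, headLetter (t⁻¹ * v) = some k}

theorem mapsTo_fixingAut_branchSet {t : V} {e : ℕ ≃ ℕ} {A A' : Set ℕ} (h : Set.MapsTo e A A') :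
    Set.MapsTo (fixingAut t e) (branchSet t A) (branchSet t A') := by
  rintro v ⟨k, hk, hv⟩
  refine ⟨e k, h hk, ?_⟩
  rw [fixingAut_apply, inv_mul_cancel_left, freeGroupCongr_apply, headLetter_map e.injective, hv]
  rfl

theorem disjoint_branchSet {t : V} {A A' : Set ℕ} (h : Disjoint A A') :
    Disjoint (branchSet t A) (branchSet t A') := by
  rintro s hA hA' v hv
  obtain ⟨k, hk, hvk⟩ := hA hv
  obtain ⟨k', hk', hvk'⟩ := hA' hv
  rw [hvk, Option.some_inj] at hvk'
  exact Set.disjoint_left.1 h hk (hvk' ▸ hk')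

theorem compl_singleton_subset_branchSet (t : V) :
    {t}ᶜ ⊆ branchSet t {k | k % 2 = 0} ∪ branchSet t {k | k % 2 = 1} := by
  intro v hv
  obtain ⟨k, hk⟩ := Option.ne_none_iff_exists'.1
    (headLetter_eq_none_iff.not.2 (by rwa [inv_mul_eq_one, eq_comm]))
  rcases Nat.mod_two_eq_zero_or_one k with h | h
  · exact .inl ⟨k, h, hk⟩
  · exact .inr ⟨k, h, hk⟩

-- `2m ↦ 4m`, and `2m + 1` runs through the non-multiples of `4` in increasing order.
def evensToZeroMod4 : Equiv.Perm ℕ where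
  toFun n := if n % 2 = 0 then 2 * n else 4 * (n / 2 / 3) + n / 2 % 3 + 1
  invFun m := if m % 4 = 0 then m / 2 else 6 * (m / 4) + 2 * (m % 4) - 1
  left_inv n := by dsimp only; split_ifs <;> omega
  right_inv m := by dsimp only; split_ifs <;> omega

-- `2m ↦ 4m + 2`, and `2m + 1` runs through the numbers `≢ 2 mod 4` in increasing order.
def evensToTwoMod4 : Equiv.Perm ℕ where
  toFun n := if n % 2 = 0 then 2 * n + 2 else
    if n / 2 % 3 = 0 then 4 * (n / 2 / 3) else
    if n / 2 % 3 = 1 then 4 * (n / 2 / 3) + 1 else 4 * (n / 2 / 3) + 3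
  invFun m := if m % 4 = 2 then (m - 2) / 2 else
    if m % 4 = 0 then 6 * (m / 4) + 1 else
    if m % 4 = 1 then 6 * (m / 4) + 3 else 6 * (m / 4) + 5
  left_inv n := by dsimp only; split_ifs <;> omega
  right_inv m := by dsimp only; split_ifs <;> omega

def swapParity : Equiv.Perm ℕ :=
  Function.Involutive.toPerm (fun n => if n % 2 = 0 then n + 1 else n - 1)
    fun n => by dsimp only; split_ifs <;> omega

theorem mapsTo_evensToZeroMod4 :
    Set.MapsTo evensToZeroMod4 {k | k % 2 = 0} {k | k % 4 = 0} := fun n (hn : n % 2 = 0) => by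
  simp only [evensToZeroMod4, Equiv.coe_fn_mk, if_pos hn, Set.mem_ofPred_eq]
  omega

theorem mapsTo_evensToTwoMod4 :
    Set.MapsTo evensToTwoMod4 {k | k % 2 = 0} {k | k % 4 = 2} := fun n (hn : n % 2 = 0) => by
  simp only [evensToTwoMod4, Equiv.coe_fn_mk, if_pos hn, Set.mem_ofPred_eq]
  omega

theorem mapsTo_swapParity : Set.MapsTo swapParity {k | k % 2 = 1} {k | k % 2 = 0} :=
  fun n (hn : n % 2 = 1) => by
    change (if n % 2 = 0 then n + 1 else n - 1) % 2 = 0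
    split_ifs <;> omega

section Supported

variable {α 𝕜 : Type*} [NormedField 𝕜] (p : ℝ≥0∞)

def supportedIn (s : Set α) : Submodule 𝕜 (lp (fun _ : α => 𝕜) p) where
  carrier := {x | ∀ i ∉ s, x i = 0}
  add_mem' ha hb i hi := by simp [ha i hi, hb i hi]
  zero_mem' _ _ := rfl
  smul_mem' c x hx i hi := by simp [hx i hi]

variable {p}

theorem supportedIn_mono {s s' : Set α} (h : s ⊆ s') :
    supportedIn (𝕜 := 𝕜) p s ≤ supportedIn p s' :=
  fun _ hx i hi => hx i fun his => hi (h his)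

theorem supportedIn_union_le (s s' : Set α) :
    supportedIn (𝕜 := 𝕜) p (s ∪ s') ≤ supportedIn p s ⊔ supportedIn p s' := by
  intro x hx
  let y : lp (fun _ : α => 𝕜) p :=
    ⟨s.indicator x, (lp.memℓp x).mono' fun i => norm_indicator_le_norm_self _ _⟩
  have hy : ∀ i, y i = s.indicator x i := fun _ => rfl
  refine Submodule.mem_sup.2 ⟨y, fun i hi => by simp [hy, hi], x - y, fun i hi => ?_, by abel⟩
  by_cases his : i ∈ s
  · simp [hy, his]
  · simp [hy, his, hx i (by simp [his, hi])]

theorem norm_add_le_of_mem_supportedIn (hp : 0 < p) {s s' : Set α} (hss' : Disjoint s s')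
    {a b : lp (fun _ : α => 𝕜) p} (ha : a ∈ supportedIn p s) (hb : b ∈ supportedIn p s')
    {r : ℝ} (har : ‖a‖ ≤ r) (hbr : ‖b‖ ≤ r) : ‖a + b‖ ≤ 2 ^ p.toReal⁻¹ * r := by
  have hab : ∀ i, a i = 0 ∨ b i = 0 := fun i => by
    by_cases hi : i ∈ s
    · exact .inr (hb i (Set.disjoint_left.1 hss' hi))
    · exact .inl (ha i hi)
  have hr : 0 ≤ r := (lp.norm_nonneg' a).trans har
  rcases p.trichotomy with rfl | rfl | hp'
  · exact absurd hp (lt_irrefl 0)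
  · simp only [ENNReal.toReal_top, inv_zero, Real.rpow_zero, one_mul]
    refine lp.norm_le_of_forall_le hr fun i => ?_
    rcases hab i with h | h
    · simpa [h] using (lp.norm_apply_le_norm ENNReal.top_ne_zero b i).trans hbr
    · simpa [h] using (lp.norm_apply_le_norm ENNReal.top_ne_zero a i).trans har
  · refine lp.norm_le_of_tsum_le hp' (by positivity) ?_
    have hsplit : ∀ i, ‖(a + b) i‖ ^ p.toReal = ‖a i‖ ^ p.toReal + ‖b i‖ ^ p.toReal := fun i => by
      rcases hab i with h | h <;> simp [h, Real.zero_rpow hp'.ne']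
    calc ∑' i, ‖(a + b) i‖ ^ p.toReal
        = ‖a‖ ^ p.toReal + ‖b‖ ^ p.toReal := by
          rw [tsum_congr hsplit, Summable.tsum_add ((lp.memℓp a).summable hp')
            ((lp.memℓp b).summable hp'), lp.norm_rpow_eq_tsum hp', lp.norm_rpow_eq_tsum hp']
      _ ≤ r ^ p.toReal + r ^ p.toReal := by
          gcongr <;> exact lp.norm_nonneg' _
      _ = (2 ^ p.toReal⁻¹ * r) ^ p.toReal := by
          rw [Real.mul_rpow (by positivity) hr, ← Real.rpow_mul zero_le_two,
            inv_mul_cancel₀ hp'.ne', Real.rpow_one, two_mul]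

end Supported

theorem exists_sub_apply_eq_of_contractingOn {𝕜 E : Type*} [NormedField 𝕜]
    [NormedAddCommGroup E] [NormedSpace 𝕜 E] [CompleteSpace E] (M : E →L[𝕜] E) {s : Set E}
    {c : ℝ} (hc₀ : 0 ≤ c) (hc₁ : c < 1) (hs : ∀ z ∈ s, M z ∈ s ∧ ‖M z‖ ≤ c * ‖z‖)
    {x : E} (hx : x ∈ s) : ∃ y, y - M y = x := by
  have hiter : ∀ n, M^[n] x ∈ s ∧ ‖M^[n] x‖ ≤ c ^ n * ‖x‖ := by
    intro n
    induction n with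
    | zero => simpa using hx
    | succ n ih =>
      rw [Function.iterate_succ_apply', pow_succ', mul_assoc]
      exact ⟨(hs _ ih.1).1, (hs _ ih.1).2.trans (by gcongr; exact ih.2)⟩
  have hsum : Summable fun n => M^[n] x :=
    .of_norm_bounded ((summable_geometric_of_lt_one hc₀ hc₁).mul_right ‖x‖) fun n => (hiter n).2
  refine ⟨∑' n, M^[n] x, ?_⟩
  rw [M.map_tsum hsum, hsum.tsum_eq_zero_add]
  simp only [Function.iterate_succ_apply', Function.iterate_zero, id]
  abel

section Shift

variable {p : ℝ≥0∞}

theorem lam_apply (g : V ≃ V) (x : lpT p) (v : V) : lam p g x v = x (g.symm v) :=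
  rfl

theorem norm_lam (hp : p ≠ 0) (g : V ≃ V) (x : lpT p) : ‖lam p g x‖ = ‖x‖ := by
  rcases p.trichotomy with rfl | rfl | hp'
  · exact absurd rfl hp
  · simp only [lp.norm_eq_ciSup, lam_apply]
    exact g.symm.iSup_comp (g := fun v => ‖x v‖)
  · rw [lp.norm_eq_tsum_rpow hp', lp.norm_eq_tsum_rpow hp']
    simp only [lam_apply]
    rw [g.symm.tsum_eq (fun v => ‖x v‖ ^ p.toReal)]

theorem lam_single (g : V ≃ V) (t : V) (a : ℂ) :
    lam p g (lp.single p t a) = lp.single p (g t) a := by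
  ext v
  simp [lam_apply, lp.single_apply, Pi.single_apply, Equiv.symm_apply_eq]

theorem lam_mem_supportedIn {g : V ≃ V} {s s' : Set V} (hg : Set.MapsTo g s s') {x : lpT p}
    (hx : x ∈ supportedIn p s) : lam p g x ∈ supportedIn p s' := fun v hv =>
  hx _ fun hs => hv (by simpa using hg hs)

def lamL (p : ℝ≥0∞) [Fact (1 ≤ p)] (g : V ≃ V) : lpT p →L[ℂ] lpT p :=
  (lam p g).mkContinuous 1 fun x => by
    rw [norm_lam (zero_lt_one.trans_le Fact.out).ne' g x, one_mul]

end Shift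

def stabCoinvariantsKer (p : ℝ≥0∞) (t : V) : Submodule ℂ (lpT p) :=
  Submodule.span ℂ {z | ∃ g : TreeAut, g t = t ∧ ∃ y, y - lam p g.toEquiv y = z}

theorem stabCoinvariantsKer_le_ker {p : ℝ≥0∞} {t : V} {M : Type*} [AddCommGroup M]
    [Module ℂ M] (f : lpT p →ₗ[ℂ] M)
    (hf : ∀ g : TreeAut, g t = t → ∀ x, f (lam p g.toEquiv x) = f x) :
    stabCoinvariantsKer p t ≤ LinearMap.ker f :=
  Submodule.span_le.2 <| by
    rintro _ ⟨g, hg, y, rfl⟩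
    simp [hf g hg]

theorem sub_lam_fixingAut_mem (p : ℝ≥0∞) (t : V) (e : ℕ ≃ ℕ) (y : lpT p) :
    y - lam p (fixingAut t e).toEquiv y ∈ stabCoinvariantsKer p t :=
  Submodule.subset_span ⟨_, fixingAut_apply_self t e, y, rfl⟩

theorem lam_add_lam_mem_and_norm_le {p : ℝ≥0∞} [Fact (1 ≤ p)] {t : V} {x : lpT p}
    (hx : x ∈ supportedIn p (branchSet t {k | k % 2 = 0})) :
    lam p (fixingAut t evensToZeroMod4).toEquiv x + lam p (fixingAut t evensToTwoMod4).toEquiv x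
        ∈ supportedIn p (branchSet t {k | k % 2 = 0}) ∧
      ‖lam p (fixingAut t evensToZeroMod4).toEquiv x
        + lam p (fixingAut t evensToTwoMod4).toEquiv x‖ ≤ 2 ^ p.toReal⁻¹ * ‖x‖ := by
  have hp : 0 < p := zero_lt_one.trans_le Fact.out
  have h₀ := lam_mem_supportedIn (mapsTo_fixingAut_branchSet mapsTo_evensToZeroMod4) hx
  have h₂ := lam_mem_supportedIn (mapsTo_fixingAut_branchSet mapsTo_evensToTwoMod4) hx
  refine ⟨add_mem (supportedIn_mono ?_ h₀) (supportedIn_mono ?_ h₂), ?_⟩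
  · rintro v ⟨k, hk, hv⟩
    exact ⟨k, by simp_all; omega, hv⟩
  · rintro v ⟨k, hk, hv⟩
    exact ⟨k, by simp_all; omega, hv⟩
  · refine norm_add_le_of_mem_supportedIn hp (disjoint_branchSet ?_) h₀ h₂
      (norm_lam hp.ne' _ x).le (norm_lam hp.ne' _ x).le
    exact Set.disjoint_left.2 fun k (hk : k % 4 = 0) (hk' : k % 4 = 2) => by omega

theorem two_inv_mul_two_rpow_lt_one {p : ℝ≥0∞} (hp : 1 < p) :
    (2⁻¹ : ℝ) * 2 ^ p.toReal⁻¹ < 1 := by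
  have h : p.toReal⁻¹ < 1 := by
    rw [← ENNReal.toReal_inv]
    exact ENNReal.toReal_lt_of_lt_ofReal (by simpa using ENNReal.inv_lt_one.2 hp)
  have := Real.rpow_lt_rpow_of_exponent_lt one_lt_two h
  rw [Real.rpow_one] at this
  linarith

theorem supportedIn_branchSet_even_le {p : ℝ≥0∞} (hp : 1 < p) (t : V) :
    supportedIn p (branchSet t {k | k % 2 = 0}) ≤ stabCoinvariantsKer p t := by
  have : Fact (1 ≤ p) := ⟨hp.le⟩
  set g₀ := (fixingAut t evensToZeroMod4).toEquiv
  set g₂ := (fixingAut t evensToTwoMod4).toEquiv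
  let M : lpT p →L[ℂ] lpT p := (2⁻¹ : ℂ) • (lamL p g₀ + lamL p g₂)
  have hM : ∀ z : lpT p, M z = (2⁻¹ : ℂ) • (lam p g₀ z + lam p g₂ z) := fun _ => rfl
  set Ev : Submodule ℂ (lpT p) := supportedIn p (branchSet t {k | k % 2 = 0})
  have hcontr : ∀ z ∈ (Ev : Set (lpT p)), M z ∈ Ev ∧ ‖M z‖ ≤ 2⁻¹ * 2 ^ p.toReal⁻¹ * ‖z‖ := by
    intro z hz
    obtain ⟨hmem, hnorm⟩ := lam_add_lam_mem_and_norm_le hz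
    refine ⟨hM z ▸ Submodule.smul_mem _ _ hmem, ?_⟩
    rw [hM, norm_smul, mul_assoc]
    simpa using hnorm
  intro x hx
  obtain ⟨y, rfl⟩ := exists_sub_apply_eq_of_contractingOn M (by positivity)
    (two_inv_mul_two_rpow_lt_one hp) hcontr hx
  have hy : y - M y = (2⁻¹ : ℂ) • (y - lam p g₀ y) + (2⁻¹ : ℂ) • (y - lam p g₂ y) := by
    rw [hM]
    module
  rw [hy]
  exact add_mem (Submodule.smul_mem _ _ (sub_lam_fixingAut_mem p t _ y))
    (Submodule.smul_mem _ _ (sub_lam_fixingAut_mem p t _ y))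

theorem supportedIn_compl_singleton_le {p : ℝ≥0∞} (hp : 1 < p) (t : V) :
    supportedIn p {t}ᶜ ≤ stabCoinvariantsKer p t := by
  refine (supportedIn_mono (compl_singleton_subset_branchSet t)).trans
    ((supportedIn_union_le _ _).trans (sup_le (supportedIn_branchSet_even_le hp t) fun x hx => ?_))
  have hτx := lam_mem_supportedIn (mapsTo_fixingAut_branchSet (t := t) mapsTo_swapParity) hx
  rw [← sub_add_cancel x (lam p (fixingAut t swapParity).toEquiv x)]
  exact add_mem (sub_lam_fixingAut_mem p t _ x) (supportedIn_branchSet_even_le hp t hτx)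

theorem map_eq_zero_of_forall_map_lam_eq {p : ℝ≥0∞} (hp : 1 < p) {t : V} {M : Type*}
    [AddCommGroup M] [Module ℂ M] (f : lpT p →ₗ[ℂ] M)
    (hf : ∀ g : TreeAut, g t = t → ∀ x, f (lam p g.toEquiv x) = f x)
    {x : lpT p} (hx : (x : V → ℂ) t = 0) : f x = 0 :=
  stabCoinvariantsKer_le_ker f hf <| supportedIn_compl_singleton_le hp t fun v hv => by
    obtain rfl : v = t := by simpa using hv
    exact hx

theorem mem_of_isCompl_of_apply_eq_zero {p : ℝ≥0∞} (hp : 1 < p) {t : V}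
    {W : Submodule ℂ (lpT p)} (hW : ∀ g : TreeAut, g t = t → ∀ x ∈ W, lam p g.toEquiv x ∈ W)
    (hWD : IsCompl W (Submodule.span ℂ {lp.single p t (1 : ℂ)})) {x : lpT p}
    (hx : (x : V → ℂ) t = 0) : x ∈ W := by
  set D : Submodule ℂ (lpT p) := Submodule.span ℂ {lp.single p t (1 : ℂ)}
  set P := D.projection W hWD.symm
  have hcomm : ∀ g : TreeAut, g t = t → Commute P (lam p g.toEquiv) := fun g hg =>
    (LinearMap.IsIdempotentElem.commute_iff (Submodule.isIdempotentElem_projection _)).2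
      ⟨by
        rw [Submodule.range_projection, Module.End.mem_invtSubmodule, Submodule.span_le,
          Set.singleton_subset_iff]
        simp [lam_single, D, hg],
       by rw [Submodule.ker_projection]; exact hW g hg⟩
  have hPx : (P x : V → ℂ) t = 0 := by
    refine map_eq_zero_of_forall_map_lam_eq hp (lp.evalₗ _ p t ∘ₗ P) (fun g hg y => ?_) hx
    have hPL : P (lam p g.toEquiv y) = lam p g.toEquiv (P y) :=
      LinearMap.congr_fun (hcomm g hg).eq y
    change (P (lam p g.toEquiv y) : V → ℂ) t = (P y : V → ℂ) t
    rw [hPL, lam_apply, g.toEquiv.symm_apply_eq.2 hg.symm]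
  obtain ⟨c, hc⟩ := Submodule.mem_span_singleton.1 (Submodule.projection_apply_mem hWD.symm x)
  rw [← hc] at hPx
  simp only [lp.coeFn_smul, Pi.smul_apply, lp.single_apply_self, smul_eq_mul, mul_one] at hPx
  rw [← Submodule.projection_apply_eq_zero_iff hWD.symm, ← hc, hPx, zero_smul]

theorem mem_iff_apply_eq_zero_of_isCompl {p : ℝ≥0∞} (hp : 1 < p) {t : V}
    {W : Submodule ℂ (lpT p)} (hW : ∀ g : TreeAut, g t = t → ∀ x ∈ W, lam p g.toEquiv x ∈ W)
    (hWD : IsCompl W (Submodule.span ℂ {lp.single p t (1 : ℂ)})) (x : lpT p) :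
    x ∈ W ↔ (x : V → ℂ) t = 0 := by
  refine ⟨fun hx => ?_, mem_of_isCompl_of_apply_eq_zero hp hW hWD⟩
  have hδ : ∀ c : ℂ, (c • lp.single p t (1 : ℂ) : lpT p) t = c := by simp
  set c := (x : V → ℂ) t
  have hcW : c • lp.single p t (1 : ℂ) ∈ W := by
    have := W.sub_mem hx <| mem_of_isCompl_of_apply_eq_zero hp hW hWD
      (x := x - c • lp.single p t 1) (by rw [lp.coeFn_sub, Pi.sub_apply, hδ, sub_self])
    rwa [sub_sub_cancel] at this
  have hc0 := Submodule.disjoint_def.1 hWD.disjoint _ hcW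
    (Submodule.smul_mem _ c (Submodule.mem_span_singleton_self _))
  simpa [hc0] using (hδ c).symm

/-- For `1 < p ≤ ∞`, every linear operator `S : ℓ_p(T) → ℂ^T` commuting with `λ(g)` for
all `g` in the stabiliser `Aut(T, t)` maps `ℓ_p(T \ {t})` into `ℂ^{T \ {t}}`;
consequently `ℓ_p(T \ {t})` is the unique `λ(Aut(T, t))`-invariant linear complement of
`ℂ·𝟙_t` in `ℓ_p(T)`. -/
theorem stabiliser_commutant_lemma (t : V) (p : ℝ≥0∞) (hp : 1 < p)
    (S : lpT p →ₗ[ℂ] (V → ℂ))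
    (hS : ∀ g : TreeAut, g t = t → ∀ x : lpT p,
      S (lam p g.toEquiv x) = lamFull g.toEquiv (S x)) :
    (∀ x : lpT p, (x : V → ℂ) t = 0 → S x t = 0) ∧
    ∀ W : Submodule ℂ (lpT p),
      (∀ g : TreeAut, g t = t → ∀ x ∈ W, lam p g.toEquiv x ∈ W) →
      IsCompl W (Submodule.span ℂ {lp.single p t (1 : ℂ)}) →
      ∀ x : lpT p, x ∈ W ↔ (x : V → ℂ) t = 0 := by
  refine ⟨fun x hx => ?_, fun W hW hWD => mem_iff_apply_eq_zero_of_isCompl hp hW hWD⟩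
  refine map_eq_zero_of_forall_map_lam_eq hp (LinearMap.proj t ∘ₗ S) (fun g hg y => ?_) hx
  simp only [LinearMap.comp_apply, LinearMap.proj_apply, hS g hg]
  change S y (g.toEquiv.symm t) = S y t
  rw [g.toEquiv.symm_apply_eq.2 hg.symm]
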